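/- arXiv:2007.06439 — 9 statements merged into one kernel-verified Lean document; each statement's English description precedes it below -/
import Mathlib

section
/- Let $k$ be a field of characteristic zero, $K/k$ a finite field extension, and $f, g : K \to K$ two $k$-linear maps. Suppose that for every $\kappa \in K$, the value $\alpha g(\beta) - \beta f(\alpha)$ is the same for all pairs $\alpha, \beta \in K$ with $\alpha\beta = \kappa$. Then $f$ and $g$ are $K$-linear, i.e., each is multiplication by a fixed element of $K$. -/
/-- Let `k` be a field of characteristic zero, `K/k` a finite field
extension, and `f, g : K → K` two `k`-linear maps.  Suppose that for every `κ ∈ K`,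
the value `α * g β - β * f α` is the same for all pairs `α, β` with `α * β = κ`.
Then `f` and `g` are `K`-linear, i.e. each is multiplication by a fixed element of `K`. -/
theorem stmt0 (k K : Type*) [Field k] [CharZero k] [Field K] [Algebra k K]
    [FiniteDimensional k K] (f g : K →ₗ[k] K)
    (h : ∀ α β α' β' : K, α * β = α' * β' →
      α * g β - β * f α = α' * g β' - β' * f α') :
    (∃ c : K, ∀ x : K, f x = c * x) ∧ (∃ c : K, ∀ x : K, g x = c * x) := by
  have hsum : ∀ α : K, g α + f α = α * (g 1 + f 1) := by
    intro α
    have h1 := h α 1 1 α (by ring)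
    linear_combination -h1
  have hf : ∀ α β : K, f (α * β) = α * f β + β * f α - α * β * f 1 := by
    intro α β
    have h2 := h α β (α * β) 1 (by ring)
    have h1 := hsum β
    linear_combination h2 - α * h1
  let D : Derivation k K K :=
    { toLinearMap := f - (f 1) • LinearMap.id
      map_one_eq_zero' := by simp
      leibniz' := fun a b => by
        simp only [LinearMap.sub_apply, LinearMap.smul_apply, LinearMap.id_apply,
          smul_eq_mul]
        rw [hf a b]; ring }
  have hD : ∀ x : K, D x = 0 := by
    intro x
    have hx : IsIntegral k x := Algebra.IsIntegral.isIntegral x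
    have hsep : (minpoly k x).Separable := Algebra.IsSeparable.isSeparable k x
    have hne : (Polynomial.aeval x) (Polynomial.derivative (minpoly k x)) ≠ 0 :=
      hsep.aeval_derivative_ne_zero (minpoly.aeval k x)
    have h0 : D ((Polynomial.aeval x) (minpoly k x)) = 0 := by
      rw [minpoly.aeval k x, map_zero]
    rw [Derivation.map_aeval, smul_eq_mul] at h0
    exact (mul_eq_zero.mp h0).resolve_left hne
  have hfx : ∀ x : K, f x = f 1 * x := by
    intro x
    have := hD x
    simp only [D, Derivation.mk_coe, LinearMap.sub_apply, LinearMap.smul_apply,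
      LinearMap.id_apply, smul_eq_mul, sub_eq_zero] at this
    exact this
  refine ⟨⟨f 1, hfx⟩, ⟨g 1, fun x => ?_⟩⟩
  have := hsum x
  rw [hfx x] at this
  linear_combination this
end

section
/- Let $m \geq 1$, let $j \in [m]$, and let $w \in B_m$. Define $\eta_j(w) = w_j \circ w$, where $w_j$ is determined as follows: letting $c_1 < \cdots < c_j$ be the elements of $S_j(w) = \{|w(k)| : k \in [j]\}$, set $w_j(c_k) = -c_{j+1-k}$ for $k \in [j]$ and $w_j(x) = x$ for $x \in [m] \setminus S_j(w)$. Then $\eta_j$ is an involution on $B_m$, and $\eta_i \circ \eta_j = \eta_j \circ \eta_i$ for all $i, j \in [m]$. -/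
/-! Signed permutations of `{±1, …, ±m}` are encoded as functions
`w : Fin m → Fin m × Bool` with injective first components; the value at the
1-based position `k+1` is `±((w k).1 + 1)`, negative iff `(w k).2 = true`. -/

/-- The order-reversing involution of the finset `S`, extended by the identity
off `S`: the `k`-th smallest element of `S` is sent to the `k`-th largest. -/
def revOn (m : ℕ) (S : Finset (Fin m)) (x : Fin m) : Fin m :=
  if h : x ∈ S then
    ((S.orderIsoOfFin rfl) (Fin.rev ((S.orderIsoOfFin rfl).symm ⟨x, h⟩)) : Fin m)
  else x

/-- `S_j(w) = {|w(1)|, …, |w(j)|}`, encoded via first components. -/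
def Sset (m j : ℕ) (w : Fin m → Fin m × Bool) : Finset (Fin m) :=
  (Finset.univ.filter (fun i : Fin m => (i : ℕ) < j)).image fun i => (w i).1

/-- The map `η_j : B_m → B_m`: the absolute values of the `j` left-most entries
are reversed within `S_j(w)` and their signs are flipped; all other entries are
unchanged (note `revOn` fixes everything outside `S_j(w)`). -/
def eta (m j : ℕ) (w : Fin m → Fin m × Bool) : Fin m → Fin m × Bool :=
  fun i => (revOn m (Sset m j w) (w i).1,
    if (i : ℕ) < j then !(w i).2 else (w i).2)

variable {m : ℕ}

lemma revOn_coe (S : Finset (Fin m)) (k : Fin S.card) :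
    revOn m S ((S.orderIsoOfFin rfl k : Fin m)) = (S.orderIsoOfFin rfl (Fin.rev k) : Fin m) := by
  unfold revOn
  rw [dif_pos (S.orderIsoOfFin rfl k).2]
  congr 2
  rw [show (⟨((S.orderIsoOfFin rfl k : Fin m)), (S.orderIsoOfFin rfl k).2⟩ : {x // x ∈ S})
      = S.orderIsoOfFin rfl k from rfl, OrderIso.symm_apply_apply]

lemma revOn_mem (S : Finset (Fin m)) {x : Fin m} (h : x ∈ S) : revOn m S x ∈ S := by
  unfold revOn
  rw [dif_pos h]
  exact (S.orderIsoOfFin rfl _).2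

lemma revOn_not_mem (S : Finset (Fin m)) {x : Fin m} (h : x ∉ S) : revOn m S x = x :=
  dif_neg h

lemma exists_coe (S : Finset (Fin m)) {x : Fin m} (h : x ∈ S) :
    ∃ k : Fin S.card, x = (S.orderIsoOfFin rfl k : Fin m) :=
  ⟨(S.orderIsoOfFin rfl).symm ⟨x, h⟩, by rw [OrderIso.apply_symm_apply]⟩

lemma revOn_involutive (S : Finset (Fin m)) : Function.Involutive (revOn m S) := by
  intro x
  by_cases h : x ∈ S
  · obtain ⟨k, rfl⟩ := exists_coe S h
    rw [revOn_coe, revOn_coe, Fin.rev_rev]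
  · rw [revOn_not_mem S h, revOn_not_mem S h]

lemma revOn_strictAntiOn (S : Finset (Fin m)) : StrictAntiOn (revOn m S) S := by
  intro x hx y hy hxy
  obtain ⟨k, rfl⟩ := exists_coe S hx
  obtain ⟨l, rfl⟩ := exists_coe S hy
  rw [revOn_coe, revOn_coe]
  have hkl : k < l := by
    by_contra hc
    exact absurd ((S.orderIsoOfFin rfl).le_iff_le.2 (not_lt.1 hc)) (not_le.2 hxy)
  exact (S.orderIsoOfFin rfl).lt_iff_lt.2 (by simpa using hkl)

/-- Two strictly monotone maps from a finset `A` into a finset `B` with `|B| = |A|`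
agree on `A`. -/
lemma strictMonoOn_unique {A B : Finset (Fin m)} (hcard : B.card = A.card)
    {f g : Fin m → Fin m} (hfB : ∀ x ∈ A, f x ∈ B) (hgB : ∀ x ∈ A, g x ∈ B)
    (hf : StrictMonoOn f A) (hg : StrictMonoOn g A) : ∀ x ∈ A, f x = g x := by
  intro x hx
  have key : ∀ h : Fin m → Fin m, (∀ x ∈ A, h x ∈ B) → StrictMonoOn h A →
      (fun k : Fin A.card => h (A.orderIsoOfFin rfl k : Fin m)) = B.orderEmbOfFin hcard := by
    intro h hB hmono
    refine Finset.orderEmbOfFin_unique hcard (fun k => hB _ (A.orderIsoOfFin rfl k).2) ?_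
    intro k l hkl
    exact hmono (A.orderIsoOfFin rfl k).2 (A.orderIsoOfFin rfl l).2
      ((A.orderIsoOfFin rfl).lt_iff_lt.2 hkl)
  obtain ⟨k, rfl⟩ := exists_coe A hx
  have := (key f hfB hf).trans (key g hgB hg).symm
  exact congrFun this k

/-- The key commutation identity for `revOn`. -/
lemma revOn_comm {A S : Finset (Fin m)} (hAS : A ⊆ S) (x : Fin m) :
    revOn m (A.image (revOn m S)) (revOn m S x) = revOn m S (revOn m A x) := by
  set T := A.image (revOn m S) with hT
  have hTS : T ⊆ S := by
    intro y hy
    obtain ⟨a, ha, rfl⟩ := Finset.mem_image.1 hy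
    exact revOn_mem S (hAS ha)
  by_cases hx : x ∈ A
  · have hcard : T.card = A.card :=
      Finset.card_image_of_injective _ (revOn_involutive S).injective
    refine strictMonoOn_unique hcard (f := fun x => revOn m T (revOn m S x))
      (g := fun x => revOn m S (revOn m A x)) ?_ ?_ ?_ ?_ x hx
    · intro y hy; exact revOn_mem T (Finset.mem_image_of_mem _ hy)
    · intro y hy; exact Finset.mem_image_of_mem _ (revOn_mem A hy)
    · intro y hy z hz hyz
      exact revOn_strictAntiOn T (Finset.mem_image_of_mem _ hz)
        (Finset.mem_image_of_mem _ hy) (revOn_strictAntiOn S (hAS hy) (hAS hz) hyz)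
    · intro y hy z hz hyz
      exact revOn_strictAntiOn S (hAS (revOn_mem A hz)) (hAS (revOn_mem A hy))
        (revOn_strictAntiOn A hy hz hyz)
  · rw [revOn_not_mem A hx]
    by_cases hxS : x ∈ S
    · have : revOn m S x ∉ T := by
        intro hc
        obtain ⟨a, ha, hac⟩ := Finset.mem_image.1 hc
        exact hx (((revOn_involutive S).injective hac) ▸ ha)
      rw [revOn_not_mem T this]
    · rw [revOn_not_mem S hxS, revOn_not_mem T (fun hc => hxS (hTS hc))]

lemma image_revOn {A S : Finset (Fin m)} (hAS : A ⊆ S) :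
    S.image (revOn m A) = S := by
  apply Finset.eq_of_subset_of_card_le
  · intro y hy
    obtain ⟨a, ha, rfl⟩ := Finset.mem_image.1 hy
    by_cases h : a ∈ A
    · exact hAS (revOn_mem A h)
    · rwa [revOn_not_mem A h]
  · rw [Finset.card_image_of_injective _ (revOn_involutive A).injective]

lemma Sset_eta (j j' : ℕ) (w : Fin m → Fin m × Bool) :
    Sset m j (eta m j' w) = (Sset m j w).image (revOn m (Sset m j' w)) := by
  simp only [Sset, eta, Finset.image_image]
  rfl

lemma Sset_mono {i j : ℕ} (hij : i ≤ j) (w : Fin m → Fin m × Bool) :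
    Sset m i w ⊆ Sset m j w :=
  Finset.image_subset_image (by
    intro k hk
    simp only [Finset.mem_filter, Finset.mem_univ, true_and] at *
    omega)

lemma eta_comm_le {i j : ℕ} (hij : i ≤ j) (w : Fin m → Fin m × Bool) :
    eta m i (eta m j w) = eta m j (eta m i w) := by
  funext k
  have h1 : Sset m i (eta m j w) = (Sset m i w).image (revOn m (Sset m j w)) :=
    Sset_eta i j w
  have h2 : Sset m j (eta m i w) = Sset m j w := by
    rw [Sset_eta j i w, image_revOn (Sset_mono hij w)]
  show (_, _) = (_, _)
  rw [Prod.mk.injEq]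
  constructor
  · show revOn m (Sset m i (eta m j w)) ((eta m j w k).1) =
      revOn m (Sset m j (eta m i w)) ((eta m i w k).1)
    rw [h1, h2]
    exact revOn_comm (Sset_mono hij w) (w k).1
  · show (if (k:ℕ) < i then !(eta m j w k).2 else (eta m j w k).2) =
      (if (k:ℕ) < j then !(eta m i w k).2 else (eta m i w k).2)
    simp only [eta]
    split_ifs <;> simp_all


/-- each `η_j` (`j ∈ [m]`) maps `B_m` to itself and is an
involution, and the `η_j` pairwise commute. -/
theorem stmt2 (m : ℕ) (hm : 1 ≤ m) :
    (∀ j, 1 ≤ j → j ≤ m → ∀ w : Fin m → Fin m × Bool,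
      Function.Injective (fun i => (w i).1) →
      (Function.Injective fun i => ((eta m j w) i).1) ∧ eta m j (eta m j w) = w) ∧
    (∀ i j, 1 ≤ i → i ≤ m → 1 ≤ j → j ≤ m → ∀ w : Fin m → Fin m × Bool,
      Function.Injective (fun i => (w i).1) →
      eta m i (eta m j w) = eta m j (eta m i w)) := by
  constructor
  · intro j _ _ w hw
    constructor
    · have : (fun i => ((eta m j w) i).1) = (revOn m (Sset m j w)) ∘ (fun i => (w i).1) := rfl
      rw [this]
      exact ((revOn_involutive _).injective).comp hw
    · funext k
      show (_, _) = w k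
      have h2 : Sset m j (eta m j w) = Sset m j w := by
        rw [Sset_eta j j w, image_revOn (subset_refl _)]
      rw [Prod.mk.injEq]
      constructor
      · show revOn m (Sset m j (eta m j w)) ((eta m j w k).1) = (w k).1
        rw [h2]
        exact revOn_involutive _ (w k).1
      · show (if (k:ℕ) < j then !(eta m j w k).2 else (eta m j w k).2) = (w k).2
        simp only [eta]
        split_ifs <;> simp
  · intro i j _ _ _ _ w _
    rcases le_total i j with h | h
    · exact eta_comm_le h w
    · exact (eta_comm_le h w).symm
end

section
/- Let $m \geq 2$ and let $k$ be any field. Let $\mathcal{H}_m \otimes k$ be the higher Heisenberg Lie algebra over $k$ with basis $x_1,\dots,x_m,y_1,\dots,y_m,z$ and relations $[x_i,y_i] = z$ for all $i$ (all other basis brackets zero). Then $\mathcal{H}_m \otimes k$ is indecomposable: if $\mathcal{H}_m \otimes k = M_1 \oplus M_2$ as a direct sum of Lie ideals, then $M_1 = 0$ or $M_2 = 0$. -/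
/-!
Let `L = I ⊕ J` with ideals `I`, `J`; then `⁅I, J⁆ ⊆ I ⊓ J = 0`, so the two components of a
central element are central. Since the center is the line `k ∙ z`, this puts `z` in `I` or in `J`,
say in `I`. Every `w ∈ J` then commutes with `I`, and with `J` because `⁅J, J⁆ ⊆ J ⊓ k ∙ z ⊆ J ⊓ I`;
so `w` is central, hence lies in `k ∙ z ⊆ I`, and `w = 0`.
In the Heisenberg algebra all brackets lie in `k ∙ z`, and bracketing with `xᵢ` (resp. `yᵢ`) reads
off the `yᵢ`- (resp. `xᵢ`-) coordinate, so the center is exactly `k ∙ z`.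
-/

open LieAlgebra LieModule Submodule

namespace LieIdeal

variable {R L : Type*} [CommRing R] [LieRing L] [LieAlgebra R L] {I J : LieIdeal R L} {a c : L}

theorem exists_add_eq_of_isCompl (h : IsCompl I J) (v : L) : ∃ a ∈ I, ∃ c ∈ J, a + c = v :=
  (LieSubmodule.mem_sup I J v).mp (by rw [h.sup_eq_top]; trivial)

theorem lie_eq_zero_of_disjoint (h : Disjoint I J) (ha : a ∈ I) (hc : c ∈ J) : ⁅a, c⁆ = 0 := by
  have := LieSubmodule.lie_le_inf I J (LieSubmodule.lie_mem_lie ha hc)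
  rwa [h.eq_bot, LieSubmodule.mem_bot] at this

theorem mem_center_of_isCompl (h : IsCompl I J) (ha : a ∈ I) (hI : ∀ v ∈ I, ⁅v, a⁆ = 0) :
    a ∈ center R L := by
  rw [center, mem_maxTrivSubmodule]
  intro v
  obtain ⟨v₁, hv₁, v₂, hv₂, rfl⟩ := exists_add_eq_of_isCompl h v
  rw [add_lie, hI v₁ hv₁, lie_eq_zero_of_disjoint h.disjoint.symm hv₂ ha, add_zero]

theorem mem_center_of_add_mem_center (h : IsCompl I J) (ha : a ∈ I) (hc : c ∈ J)
    (hac : a + c ∈ center R L) : a ∈ center R L := by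
  refine mem_center_of_isCompl h ha fun v hv => ?_
  have hsum : ⁅v, a + c⁆ = 0 := (mem_maxTrivSubmodule R L L _).mp hac v
  rwa [lie_add, lie_eq_zero_of_disjoint h.disjoint hv hc, add_zero] at hsum

end LieIdeal

namespace LieAlgebra

variable {k L : Type*} [Field k] [LieRing L] [LieAlgebra k L] {z : L} {I J : LieIdeal k L}

theorem mem_or_mem_of_isCompl_of_center_eq_span (hcenter : (center k L).toSubmodule = k ∙ z)
    (h : IsCompl I J) : z ∈ I ∨ z ∈ J := by
  have hz : z ∈ center k L := by
    rw [← LieSubmodule.mem_toSubmodule, hcenter]; exact mem_span_singleton_self z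
  obtain ⟨a, ha, c, hc, rfl⟩ := LieIdeal.exists_add_eq_of_isCompl h z
  have hac : a ∈ k ∙ (a + c) := by
    rw [← hcenter]; exact LieIdeal.mem_center_of_add_mem_center h ha hc hz
  obtain ⟨s, hs⟩ := mem_span_singleton.mp hac
  by_cases hs0 : s = 0
  · right
    rwa [← hs, hs0, zero_smul, zero_add]
  · left
    rw [← inv_smul_smul₀ hs0 (a + c), hs]
    exact I.smul_mem _ ha

theorem eq_bot_of_isCompl_of_mem (hcenter : (center k L).toSubmodule = k ∙ z)
    (hder : ∀ a c : L, ⁅a, c⁆ ∈ k ∙ z) (h : IsCompl I J) (hzI : z ∈ I) : J = ⊥ := by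
  have hline : ∀ {w}, w ∈ k ∙ z → w ∈ I := fun hw =>
    (span_singleton_le_iff_mem z (I : Submodule k L)).mpr hzI hw
  rw [eq_bot_iff]
  intro w hw
  have hwc : w ∈ center k L := LieIdeal.mem_center_of_isCompl h.symm hw fun v _ => by
    have hvI : ⁅v, w⁆ ∈ I ⊓ J := ⟨hline (hder v w), J.lie_mem hw⟩
    rwa [h.inf_eq_bot, LieSubmodule.mem_bot] at hvI
  have hwI : w ∈ I ⊓ J := ⟨hline (hcenter ▸ hwc), hw⟩
  rwa [h.inf_eq_bot] at hwI

theorem eq_bot_or_eq_bot_of_isCompl_of_center_eq_span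
    (hcenter : (center k L).toSubmodule = k ∙ z) (hder : ∀ a c : L, ⁅a, c⁆ ∈ k ∙ z)
    (h : IsCompl I J) : I = ⊥ ∨ J = ⊥ := by
  rcases mem_or_mem_of_isCompl_of_center_eq_span hcenter h with hzI | hzJ
  · exact Or.inr (eq_bot_of_isCompl_of_mem hcenter hder h hzI)
  · exact Or.inl (eq_bot_of_isCompl_of_mem hcenter hder h.symm hzJ)

end LieAlgebra

theorem Module.Basis.lie_mem_of_forall {ι R L : Type*} [CommRing R] [LieRing L] [LieAlgebra R L]
    (b : Module.Basis ι R L) (P : Submodule R L) (h : ∀ i j, ⁅b i, b j⁆ ∈ P) (a c : L) :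
    ⁅a, c⁆ ∈ P := by
  have hB : (toEnd R L L : L →ₗ[R] Module.End R L).compr₂ P.mkQ = 0 :=
    LinearMap.ext_basis b b fun i j => by simpa using h i j
  simpa using LinearMap.congr_fun₂ hB a c

section Heisenberg

open Sum

variable {m : ℕ} {k L : Type*} [Field k] [LieRing L] [LieAlgebra k L]

structure IsHeisenbergBasis (b : Module.Basis (Fin m ⊕ Fin m ⊕ Unit) k L) (x y : Fin m → L)
    (z : L) : Prop where
  x_eq : ∀ i, x i = b (inl i)
  y_eq : ∀ i, y i = b (inr (inl i))
  z_eq : z = b (inr (inr ()))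
  lie_x_y_self : ∀ i, ⁅x i, y i⁆ = z
  lie_x_y_of_ne : ∀ i j, i ≠ j → ⁅x i, y j⁆ = 0
  lie_x_x : ∀ i j, ⁅x i, x j⁆ = 0
  lie_y_y : ∀ i j, ⁅y i, y j⁆ = 0
  lie_x_z : ∀ i, ⁅x i, z⁆ = 0
  lie_y_z : ∀ i, ⁅y i, z⁆ = 0

namespace IsHeisenbergBasis

variable {b : Module.Basis (Fin m ⊕ Fin m ⊕ Unit) k L} {x y : Fin m → L} {z : L}

theorem lie_x_eq_coord_smul (hb : IsHeisenbergBasis b x y z) (i : Fin m) (w : L) :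
    ⁅x i, w⁆ = b.coord (inr (inl i)) w • z := by
  suffices ad k L (x i) = (b.coord (inr (inl i))).smulRight z from LinearMap.congr_fun this w
  refine b.ext fun u => ?_
  rw [ad_apply, LinearMap.smulRight_apply, b.coord_apply, b.repr_self]
  rcases u with j | j | ⟨⟩
  · simp [← hb.x_eq, hb.lie_x_x]
  · by_cases hij : i = j
    · subst hij; simp [← hb.y_eq, hb.lie_x_y_self]
    · simp [← hb.y_eq, hb.lie_x_y_of_ne i j hij, Ne.symm hij]
  · simp [← hb.z_eq, hb.lie_x_z]

theorem lie_y_eq_coord_smul (hb : IsHeisenbergBasis b x y z) (i : Fin m) (w : L) :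
    ⁅y i, w⁆ = -b.coord (inl i) w • z := by
  suffices ad k L (y i) = (-b.coord (inl i)).smulRight z from LinearMap.congr_fun this w
  refine b.ext fun u => ?_
  rw [ad_apply, LinearMap.smulRight_apply, LinearMap.neg_apply, b.coord_apply, b.repr_self]
  rcases u with j | j | ⟨⟩
  · rw [← hb.x_eq, ← lie_skew]
    by_cases hij : j = i
    · subst hij; simp [hb.lie_x_y_self]
    · simp [hb.lie_x_y_of_ne j i hij, Ne.symm hij]
  · simp [← hb.y_eq, hb.lie_y_y]
  · simp [← hb.z_eq, hb.lie_y_z]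

theorem lie_z_eq_zero (hb : IsHeisenbergBasis b x y z) (w : L) : ⁅z, w⁆ = 0 := by
  suffices ad k L z = 0 from LinearMap.congr_fun this w
  refine b.ext fun u => ?_
  rw [ad_apply, LinearMap.zero_apply]
  rcases u with j | j | ⟨⟩
  · rw [← hb.x_eq, ← lie_skew, hb.lie_x_z, neg_zero]
  · rw [← hb.y_eq, ← lie_skew, hb.lie_y_z, neg_zero]
  · rw [← hb.z_eq, lie_self]

theorem lie_mem_span (hb : IsHeisenbergBasis b x y z) (a c : L) : ⁅a, c⁆ ∈ k ∙ z := by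
  refine b.lie_mem_of_forall _ (fun u v => ?_) a c
  rcases u with i | i | ⟨⟩
  · rw [← hb.x_eq, hb.lie_x_eq_coord_smul]; exact smul_mem _ _ (mem_span_singleton_self z)
  · rw [← hb.y_eq, hb.lie_y_eq_coord_smul]; exact smul_mem _ _ (mem_span_singleton_self z)
  · rw [← hb.z_eq, hb.lie_z_eq_zero]; exact zero_mem _

theorem center_eq_span (hb : IsHeisenbergBasis b x y z) : (center k L).toSubmodule = k ∙ z := by
  have hz : z ≠ 0 := hb.z_eq ▸ b.ne_zero _
  refine le_antisymm (fun w hw => ?_) ((span_singleton_le_iff_mem _ _).mpr ?_)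
  · have hcomm : ∀ v, ⁅v, w⁆ = 0 := (mem_maxTrivSubmodule k L L w).mp hw
    have hcoord : ∀ u, b.coord u w • z = 0 → b.repr w u = 0 := fun u hu =>
      (smul_eq_zero.mp hu).resolve_right hz
    have hsupp : (↑(b.repr w).support : Set (Fin m ⊕ Fin m ⊕ Unit)) ⊆ {inr (inr ())} := by
      intro u hu
      rcases u with i | i | ⟨⟨⟩⟩
      · refine absurd (hcoord _ ?_) (Finsupp.mem_support_iff.mp hu)
        rw [← neg_eq_zero, ← neg_smul, ← hb.lie_y_eq_coord_smul, hcomm]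
      · refine absurd (hcoord _ ?_) (Finsupp.mem_support_iff.mp hu)
        rw [← hb.lie_x_eq_coord_smul, hcomm]
      · exact Set.mem_singleton _
    simpa [← hb.z_eq] using b.mem_span_image.mpr hsupp
  · exact (mem_maxTrivSubmodule k L L z).mpr fun v => by rw [← lie_skew, hb.lie_z_eq_zero, neg_zero]

end IsHeisenbergBasis

end Heisenberg

theorem stmt4_general (m : ℕ) (k : Type*) [Field k]
    (L : Type*) [LieRing L] [LieAlgebra k L]
    (b : Module.Basis (Fin m ⊕ Fin m ⊕ Unit) k L)
    (x y : Fin m → L) (z : L)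
    (hx : ∀ i, x i = b (Sum.inl i))
    (hy : ∀ i, y i = b (Sum.inr (Sum.inl i)))
    (hz : z = b (Sum.inr (Sum.inr ())))
    (hxy : ∀ i, ⁅x i, y i⁆ = z)
    (hxy' : ∀ i j, i ≠ j → ⁅x i, y j⁆ = 0)
    (hxx : ∀ i j, ⁅x i, x j⁆ = 0)
    (hyy : ∀ i j, ⁅y i, y j⁆ = 0)
    (hxz : ∀ i, ⁅x i, z⁆ = 0)
    (hyz : ∀ i, ⁅y i, z⁆ = 0)
    (M₁ M₂ : LieIdeal k L) (hcompl : IsCompl M₁ M₂) :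
    M₁ = ⊥ ∨ M₂ = ⊥ := by
  have hb : IsHeisenbergBasis b x y z := ⟨hx, hy, hz, hxy, hxy', hxx, hyy, hxz, hyz⟩
  exact eq_bot_or_eq_bot_of_isCompl_of_center_eq_span hb.center_eq_span hb.lie_mem_span hcompl

/-- the higher Heisenberg Lie algebra `𝓗_m ⊗ k` (basis
`x₁,…,x_m,y₁,…,y_m,z` with `[xᵢ,yᵢ] = z` and all other basis brackets zero) is
indecomposable: it is not the direct sum of two nonzero Lie ideals. -/
theorem stmt4 (m : ℕ) (hm : 2 ≤ m) (k : Type*) [Field k]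
    (L : Type*) [LieRing L] [LieAlgebra k L]
    (b : Module.Basis (Fin m ⊕ Fin m ⊕ Unit) k L)
    (x y : Fin m → L) (z : L)
    (hx : ∀ i, x i = b (Sum.inl i))
    (hy : ∀ i, y i = b (Sum.inr (Sum.inl i)))
    (hz : z = b (Sum.inr (Sum.inr ())))
    (hxy : ∀ i, ⁅x i, y i⁆ = z)
    (hxy' : ∀ i j, i ≠ j → ⁅x i, y j⁆ = 0)
    (hxx : ∀ i j, ⁅x i, x j⁆ = 0)
    (hyy : ∀ i j, ⁅y i, y j⁆ = 0)
    (hxz : ∀ i, ⁅x i, z⁆ = 0)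
    (hyz : ∀ i, ⁅y i, z⁆ = 0)
    (M₁ M₂ : LieIdeal k L) (hcompl : IsCompl M₁ M₂) :
    M₁ = ⊥ ∨ M₂ = ⊥ :=
  stmt4_general m k L b x y z hx hy hz hxy hxy' hxx hyy hxz hyz M₁ M₂ hcompl
end

section
/- Let $L$ be a finite-dimensional nilpotent Lie algebra over a field $k$ of characteristic zero, let $R$ be a finite-dimensional commutative $k$-algebra, and let $Z \leq [L,L]$ be an ideal of $L$ such that $Z \otimes_k R$ is invariant under every $k$-linear automorphism of $L \otimes_k R$. Let $\varphi \in \mathrm{Aut}_k(L \otimes_k R)$, and let $\widetilde{\varphi} : L \otimes_k R \to L \otimes_k R$ be the unique $R$-linear map agreeing with $\varphi$ on $L \otimes 1$. If $\widetilde{\varphi}(v) \equiv \psi(v) \pmod{Z \otimes R}$ for some surjective $k$-linear map $\psi$ of $L \otimes R$ and all $v$, then $\widetilde{\varphi}$ is surjective, hence an $R$-linear automorphism of $L \otimes_k R$. -/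
/-! Being `R`-linear and agreeing with the Lie automorphism `φ` on `1 ⊗ L`, the map `t` is a
morphism of Lie algebras, so its range is a Lie subalgebra of `R ⊗ L`. Since `Z ⊗ R` lies in the
derived algebra, `t ≡ ψ` makes this range span `R ⊗ L` modulo `[R ⊗ L, R ⊗ L]`, and in a nilpotent
Lie algebra such a subalgebra is everything: pushing along the lower central series, `S + C¹ = ⊤`
gives `S + Cⁿ = ⊤` for every `n`. Finite dimensionality over `k` then makes `t` bijective. -/

open TensorProduct LieModule

namespace LieSubalgebra

variable {R L : Type*} [CommRing R] [LieRing L] [LieAlgebra R L]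

lemma lowerCentralSeries_one_le_sup_succ {S : LieSubalgebra R L} {n : ℕ}
    (h : S.toSubmodule ⊔ (lowerCentralSeries R L L (n + 1)).toSubmodule = ⊤) :
    (lowerCentralSeries R L L 1).toSubmodule ≤
      S.toSubmodule ⊔ (lowerCentralSeries R L L (n + 2)).toSubmodule := by
  have lie_mem : ∀ w, ∀ z ∈ lowerCentralSeries R L L (n + 1),
      ⁅w, z⁆ ∈ lowerCentralSeries R L L (n + 2) := fun w z hz => by
    rw [lowerCentralSeries_succ]
    exact LieSubmodule.lie_mem_lie (LieSubmodule.mem_top w) hz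
  rw [lowerCentralSeries_succ, lowerCentralSeries_zero,
    LieSubmodule.lieIdeal_oper_eq_linear_span', Submodule.span_le]
  rintro - ⟨x, -, y, -, rfl⟩
  obtain ⟨a, ha, c, hc, rfl⟩ := Submodule.mem_sup.mp (h ▸ Submodule.mem_top : x ∈ _)
  obtain ⟨b, hb, d, hd, rfl⟩ := Submodule.mem_sup.mp (h ▸ Submodule.mem_top : y ∈ _)
  rw [add_lie, lie_add, lie_add, ← lie_skew c b, add_assoc]
  exact add_mem (Submodule.mem_sup_left (S.lie_mem ha hb)) <| Submodule.mem_sup_right <|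
    add_mem (lie_mem _ _ hd) (add_mem (neg_mem (lie_mem _ _ hc)) (lie_mem _ _ hd))

theorem eq_top_of_sup_lowerCentralSeries_one_eq_top [IsNilpotent L L] {S : LieSubalgebra R L}
    (h : S.toSubmodule ⊔ (lowerCentralSeries R L L 1).toSubmodule = ⊤) : S = ⊤ := by
  have sup_eq_top : ∀ n, S.toSubmodule ⊔ (lowerCentralSeries R L L (n + 1)).toSubmodule = ⊤ := by
    intro n
    induction n with
    | zero => exact h
    | succ n ih =>
      refine top_unique ?_
      calc ⊤ = S.toSubmodule ⊔ (lowerCentralSeries R L L 1).toSubmodule := h.symm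
        _ ≤ S.toSubmodule ⊔ (S.toSubmodule ⊔ (lowerCentralSeries R L L (n + 2)).toSubmodule) :=
          sup_le_sup_left (lowerCentralSeries_one_le_sup_succ ih) _
        _ = _ := by rw [← sup_assoc, sup_idem]
  obtain ⟨n, hn⟩ := IsNilpotent.nilpotent R L L
  have hbot : lowerCentralSeries R L L (n + 1) = ⊥ :=
    le_bot_iff.mp (hn ▸ antitone_lowerCentralSeries R L L n.le_succ)
  rw [← toSubmodule_eq_top, ← sup_eq_top n, hbot, LieSubmodule.bot_toSubmodule, sup_bot_eq]

end LieSubalgebra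

section ExtendScalars

variable {k R L : Type*} [CommRing k] [CommRing R] [Algebra k R] [LieRing L] [LieAlgebra k L]

lemma LinearMap.map_lie_of_map_lie_one_tmul {M : Type*} [LieRing M] [LieAlgebra R M]
    (t : R ⊗[k] L →ₗ[R] M) (h : ∀ x y : L, t (1 ⊗ₜ ⁅x, y⁆) = ⁅t (1 ⊗ₜ x), t (1 ⊗ₜ y)⁆)
    (a b : R ⊗[k] L) : t ⁅a, b⁆ = ⁅t a, t b⁆ := by
  have tmul_eq : ∀ (r : R) (x : L), t (r ⊗ₜ x) = r • t (1 ⊗ₜ x) := fun r x => by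
    rw [← map_smul, TensorProduct.smul_tmul', smul_eq_mul, mul_one]
  induction a using TensorProduct.induction_on with
  | zero => simp
  | add a₁ a₂ h₁ h₂ => simp only [add_lie, map_add, h₁, h₂]
  | tmul r x =>
    induction b using TensorProduct.induction_on with
    | zero => simp
    | add b₁ b₂ h₁ h₂ => simp only [lie_add, map_add, h₁, h₂]
    | tmul s y =>
      rw [LieAlgebra.ExtendScalars.bracket_tmul, tmul_eq (r * s), h, tmul_eq r, tmul_eq s, smul_lie,
        lie_smul, smul_smul]

variable (R) in
lemma LieIdeal.baseChange_le_lowerCentralSeries_one {Z : LieIdeal k L}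
    (hZ : Z ≤ ⁅(⊤ : LieIdeal k L), (⊤ : LieIdeal k L)⁆) :
    Z.toSubmodule.baseChange R ≤ (lowerCentralSeries R (R ⊗[k] L) (R ⊗[k] L) 1).toSubmodule := by
  rw [LieSubmodule.lowerCentralSeries_tensor_eq_baseChange, LieSubmodule.coe_baseChange]
  exact Submodule.baseChange_mono R hZ

end ExtendScalars

theorem stmt6_general (k : Type*) [Field k]
    (L : Type*) [LieRing L] [LieAlgebra k L] [FiniteDimensional k L]
    [LieRing.IsNilpotent L]
    (R : Type*) [CommRing R] [Algebra k R] [Module.Finite k R]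
    (Z : LieIdeal k L) (hZder : Z ≤ ⁅(⊤ : LieIdeal k L), (⊤ : LieIdeal k L)⁆)
    (φ : (R ⊗[k] L) ≃ₗ[k] (R ⊗[k] L)) (hφ : ∀ u v, φ ⁅u, v⁆ = ⁅φ u, φ v⁆)
    (t : (R ⊗[k] L) →ₗ[R] (R ⊗[k] L))
    (ht : ∀ x : L, t ((1 : R) ⊗ₜ[k] x) = φ ((1 : R) ⊗ₜ[k] x))
    (ψ : (R ⊗[k] L) →ₗ[k] (R ⊗[k] L)) (hψ : Function.Surjective ψ)
    (hcong : ∀ v, t v - ψ v ∈ Z.toSubmodule.baseChange R) :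
    Function.Surjective t ∧ Function.Bijective t := by
  have t_lie : ∀ x y : L, t (1 ⊗ₜ ⁅x, y⁆) = ⁅t (1 ⊗ₜ x), t (1 ⊗ₜ y)⁆ := fun x y => by
    rw [ht, ht, ht, ← hφ, LieAlgebra.ExtendScalars.bracket_tmul, one_mul]
  let f : R ⊗[k] L →ₗ⁅R⁆ R ⊗[k] L := { t with map_lie' := t.map_lie_of_map_lie_one_tmul t_lie _ _ }
  have range_sup_eq_top :
      f.range.toSubmodule ⊔ (lowerCentralSeries R (R ⊗[k] L) (R ⊗[k] L) 1).toSubmodule = ⊤ := by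
    refine top_unique fun v _ => ?_
    obtain ⟨u, rfl⟩ := hψ v
    rw [← sub_sub_cancel (t u) (ψ u)]
    exact sub_mem (Submodule.mem_sup_left ⟨u, rfl⟩)
      (Submodule.mem_sup_right (Z.baseChange_le_lowerCentralSeries_one R hZder (hcong u)))
  have hsurj : Function.Surjective t := by
    rw [← LinearMap.range_eq_top]
    exact congrArg LieSubalgebra.toSubmodule
      (LieSubalgebra.eq_top_of_sup_lowerCentralSeries_one_eq_top range_sup_eq_top)
  exact ⟨hsurj, (t.restrictScalars k).injective_iff_surjective.mpr hsurj, hsurj⟩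

/-- let `L` be a finite-dimensional nilpotent Lie algebra over a
field `k` of characteristic zero, `R` a finite-dimensional commutative
`k`-algebra, and `Z ≤ [L,L]` an ideal whose base change `Z ⊗ R` is invariant
under every `k`-linear automorphism of `L ⊗ R`.  If `φ` is a `k`-automorphism of
`L ⊗ R`, `t` is the unique `R`-linear map agreeing with `φ` on `L ⊗ 1`, and
`t ≡ ψ (mod Z ⊗ R)` for some surjective `k`-linear `ψ`, then `t` is surjective,
hence an `R`-linear automorphism. -/
theorem stmt6 (k : Type*) [Field k] [CharZero k]
    (L : Type*) [LieRing L] [LieAlgebra k L] [FiniteDimensional k L]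
    [LieRing.IsNilpotent L]
    (R : Type*) [CommRing R] [Algebra k R] [Module.Finite k R]
    (Z : LieIdeal k L) (hZder : Z ≤ ⁅(⊤ : LieIdeal k L), (⊤ : LieIdeal k L)⁆)
    (hinv : ∀ g : (R ⊗[k] L) ≃ₗ[k] (R ⊗[k] L), (∀ u v, g ⁅u, v⁆ = ⁅g u, g v⁆) →
      Submodule.map (g.toLinearMap)
          ((Z.toSubmodule.baseChange R).restrictScalars k) =
        (Z.toSubmodule.baseChange R).restrictScalars k)
    (φ : (R ⊗[k] L) ≃ₗ[k] (R ⊗[k] L)) (hφ : ∀ u v, φ ⁅u, v⁆ = ⁅φ u, φ v⁆)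
    (t : (R ⊗[k] L) →ₗ[R] (R ⊗[k] L))
    (ht : ∀ x : L, t ((1 : R) ⊗ₜ[k] x) = φ ((1 : R) ⊗ₜ[k] x))
    (ψ : (R ⊗[k] L) →ₗ[k] (R ⊗[k] L)) (hψ : Function.Surjective ψ)
    (hcong : ∀ v, t v - ψ v ∈ Z.toSubmodule.baseChange R) :
    Function.Surjective t ∧ Function.Bijective t :=
  stmt6_general k L R Z hZder φ hφ t ht ψ hψ hcong
end

section
/- Let $m, n \in \mathbb{N}$ with $n \geq 2$, and let $k$ be a field. Let $L_k = \mathcal{L}_{m,n} \otimes_{\mathbb{Z}} k$ be the class-two nilpotent Lie algebra with basis $\{x_{\mathbf{e}} : \mathbf{e} \in \mathbf{E}\} \cup \{y_{\mathbf{f}} : \mathbf{f} \in \mathbf{F}\} \cup \{z_1, \dots, z_n\}$, where $\mathbf{E} = \{\mathbf{e} \in \mathbb{N}_0^n : \sum e_i = m-1\}$, $\mathbf{F} = \{\mathbf{f} \in \mathbb{N}_0^n : \sum f_i = m\}$, with $[x_{\mathbf{e}}, y_{\mathbf{f}}] = z_i$ if $\mathbf{f} - \mathbf{e} = \mathbf{b}_i$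 (the $i$-th standard basis vector) and all other basis brackets zero, the $z_i$ central. Then for every element $v = \sum_{\mathbf{e}} a_{\mathbf{e}} x_{\mathbf{e}} + \sum_{\mathbf{f}} c_{\mathbf{f}} y_{\mathbf{f}} + \sum_i d_i z_i$ with $a_{\mathbf{e}} \neq 0$ for some $\mathbf{e}$, one has $\dim_k [v, L_k] = n$. -/
/-!
Every bracket of basis vectors lies in the centre `Z = span {z_i}`, so `[v, L] ⊆ Z`. Conversely,
fix `i` and let `ê` maximise `e_i` among the `x`-indices with `a_e ≠ 0`. If `[x_e, y_{ê + b_i}] ≠ 0`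
with `a_e ≠ 0`, then `ê + b_i = e + b_j`; for `j ≠ i` this would give `e_i = ê_i + 1`, so `j = i`
and `e = ê`. Hence `[v, y_{ê + b_i}] = a_ê z_i`, and all `n` independent vectors `z_i` lie in
`[v, L]`.
-/

theorem LieAlgebra.range_ad_le_of_lie_basis_mem {ι R L : Type*} [CommRing R] [LieRing L]
    [LieAlgebra R L] (b : Module.Basis ι R L) (Z : Submodule R L) (h : ∀ u u', ⁅b u, b u'⁆ ∈ Z)
    (v : L) : LinearMap.range (LieAlgebra.ad R L v) ≤ Z := by
  have hB : (LieAlgebra.ad R L : L →ₗ[R] L →ₗ[R] L).compr₂ Z.mkQ = 0 :=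
    LinearMap.ext_basis b b fun u u' => by
      simpa [Submodule.Quotient.mk_eq_zero] using h u u'
  rintro _ ⟨w, rfl⟩
  simpa [Submodule.Quotient.mk_eq_zero] using LinearMap.congr_fun₂ hB v w

theorem Module.Basis.map_eq_repr_smul_of_map_eq_zero {ι R M N : Type*} [Semiring R]
    [AddCommMonoid M] [Module R M] [AddCommMonoid N] [Module R N] (b : Module.Basis ι R M)
    (φ : M →ₗ[R] N) {v : M} {u₀ : ι} (h : ∀ u ≠ u₀, b.repr v u ≠ 0 → φ (b u) = 0) :
    φ v = b.repr v u₀ • φ (b u₀) := by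
  conv_lhs => rw [← b.linearCombination_repr v]
  rw [Finsupp.linearCombination_apply, map_finsuppSum, Finsupp.sum,
    Finset.sum_eq_single u₀ (fun u hu hne => ?_) fun hu => ?_, map_smul]
  · rw [map_smul, h u hne (Finsupp.mem_support_iff.1 hu), smul_zero]
  · rw [Finsupp.notMem_support_iff.1 hu, zero_smul, map_zero]

theorem eq_of_add_single_eq_add_single {ι : Type*} [DecidableEq ι] {e ê : ι → ℕ} {i j : ι}
    (h : ê + Pi.single i 1 = e + Pi.single j 1) (hle : e i ≤ ê i) : e = ê := by
  obtain rfl | hji := eq_or_ne j i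
  · exact (add_right_cancel h).symm
  · have := congr_fun h i
    simp [hji.symm] at this
    omega

section Lmn

variable {m n : ℕ}

abbrev LmnE (m n : ℕ) := {e : Fin n → ℕ // ∑ i, e i = m - 1}

abbrev LmnF (m n : ℕ) := {f : Fin n → ℕ // ∑ i, f i = m}

/-- `Sum.inl e`, `Sum.inr (Sum.inl f)`, `Sum.inr (Sum.inr i)` index `x_𝐞`, `y_𝐟`, `z_i`, with
`LmnE m n = 𝐄` and `LmnF m n = 𝐅`. -/
abbrev LmnIndex (m n : ℕ) := LmnE m n ⊕ LmnF m n ⊕ Fin n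

def LmnE.addSingle (hm : 1 ≤ m) (e : LmnE m n) (i : Fin n) : LmnF m n :=
  ⟨e.val + Pi.single i 1, by simp [Finset.sum_add_distrib, e.2]; omega⟩

@[simp]
theorem LmnE.val_addSingle (hm : 1 ≤ m) (e : LmnE m n) (i : Fin n) :
    (e.addSingle hm i).val = e.val + Pi.single i 1 :=
  rfl

structure IsLmnBasis {k L : Type*} [CommRing k] [LieRing L] [LieAlgebra k L]
    (b : Module.Basis (LmnIndex m n) k L) : Prop where
  lie_x_y : ∀ (e : LmnE m n) (f : LmnF m n) (i : Fin n),
    (∀ j, f.val j = e.val j + if j = i then 1 else 0) →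
    ⁅b (Sum.inl e), b (Sum.inr (Sum.inl f))⁆ = b (Sum.inr (Sum.inr i))
  lie_x_y_eq_zero : ∀ (e : LmnE m n) (f : LmnF m n),
    (¬ ∃ i : Fin n, ∀ j, f.val j = e.val j + if j = i then 1 else 0) →
    ⁅b (Sum.inl e), b (Sum.inr (Sum.inl f))⁆ = 0
  lie_x_x : ∀ e e', ⁅b (Sum.inl e), b (Sum.inl e')⁆ = 0
  lie_y_y : ∀ f f', ⁅b (Sum.inr (Sum.inl f)), b (Sum.inr (Sum.inl f'))⁆ = 0
  lie_z : ∀ u (i : Fin n), ⁅b u, b (Sum.inr (Sum.inr i))⁆ = 0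

namespace IsLmnBasis

section CommRing

variable {k L : Type*} [CommRing k] [LieRing L] [LieAlgebra k L]
  {b : Module.Basis (LmnIndex m n) k L}

theorem lie_mem_span_z (hb : IsLmnBasis b) (u u' : LmnIndex m n) :
    ⁅b u, b u'⁆ ∈ Submodule.span k (Set.range (b ∘ Sum.inr ∘ Sum.inr)) := by
  have hx_y (e : LmnE m n) (f : LmnF m n) :
      ⁅b (Sum.inl e), b (Sum.inr (Sum.inl f))⁆ ∈
        Submodule.span k (Set.range (b ∘ Sum.inr ∘ Sum.inr)) := by
    by_cases h : ∃ i : Fin n, ∀ j, f.val j = e.val j + if j = i then 1 else 0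
    · obtain ⟨i, hi⟩ := h
      rw [hb.lie_x_y e f i hi]
      exact Submodule.subset_span ⟨i, rfl⟩
    · rw [hb.lie_x_y_eq_zero e f h]
      exact Submodule.zero_mem _
  rcases u' with e' | f' | i'
  · rcases u with e | f | i
    · simp [hb.lie_x_x]
    · rw [← lie_skew]
      exact neg_mem (hx_y e' f)
    · rw [← lie_skew, hb.lie_z, neg_zero]
      exact Submodule.zero_mem _
  · rcases u with e | f | i
    · exact hx_y e f'
    · simp [hb.lie_y_y]
    · rw [← lie_skew, hb.lie_z, neg_zero]
      exact Submodule.zero_mem _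
  · simp [hb.lie_z]

theorem lie_x_addSingle_eq_zero (hb : IsLmnBasis b) (hm : 1 ≤ m) {e ê : LmnE m n} {i : Fin n}
    (hne : e ≠ ê) (hle : e.val i ≤ ê.val i) :
    ⁅b (Sum.inl e), b (Sum.inr (Sum.inl (ê.addSingle hm i)))⁆ = 0 :=
  hb.lie_x_y_eq_zero _ _ fun ⟨j, hj⟩ => hne <| Subtype.ext <|
    eq_of_add_single_eq_add_single (funext fun l => by simpa [Pi.single_apply] using hj l) hle

theorem lie_addSingle_eq_smul (hb : IsLmnBasis b) (hm : 1 ≤ m) {v : L} {ê : LmnE m n} {i : Fin n}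
    (hmax : ∀ e : LmnE m n, b.repr v (Sum.inl e) ≠ 0 → e.val i ≤ ê.val i) :
    ⁅v, b (Sum.inr (Sum.inl (ê.addSingle hm i)))⁆ =
      b.repr v (Sum.inl ê) • b (Sum.inr (Sum.inr i)) := by
  have hφ := b.map_eq_repr_smul_of_map_eq_zero
    ((LieAlgebra.ad k L : L →ₗ[k] Module.End k L).flip (b (Sum.inr (Sum.inl (ê.addSingle hm i)))))
    (v := v) (u₀ := Sum.inl ê) ?_
  · simp only [LinearMap.flip_apply, LieHom.coe_toLinearMap, LieAlgebra.ad_apply] at hφ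
    rw [hφ, hb.lie_x_y ê _ i fun j => by rw [LmnE.val_addSingle, Pi.add_apply, Pi.single_apply]]
  rintro (e | f | j) hne hv <;> show ⁅_, _⁆ = 0
  · exact hb.lie_x_addSingle_eq_zero hm (fun h => hne (congrArg _ h)) (hmax e hv)
  · exact hb.lie_y_y f _
  · rw [← lie_skew, hb.lie_z, neg_zero]

end CommRing

variable {k L : Type*} [Field k] [LieRing L] [LieAlgebra k L]
  {b : Module.Basis (LmnIndex m n) k L}

theorem z_mem_range_ad (hb : IsLmnBasis b) (hm : 1 ≤ m) {v : L}
    (hv : ∃ e, b.repr v (Sum.inl e) ≠ 0) (i : Fin n) :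
    b (Sum.inr (Sum.inr i)) ∈ LinearMap.range (LieAlgebra.ad k L v) := by
  let xSupport := (b.repr v).support.preimage Sum.inl Sum.inl_injective.injOn
  have hmem (e : LmnE m n) : e ∈ xSupport ↔ b.repr v (Sum.inl e) ≠ 0 := by
    rw [Finset.mem_preimage, Finsupp.mem_support_iff]
  obtain ⟨ê, hê, hmax⟩ := xSupport.exists_max_image (fun e => e.val i)
    (hv.imp fun e he => (hmem e).2 he)
  have hkey := hb.lie_addSingle_eq_smul hm fun e he => hmax e ((hmem e).2 he)
  refine ⟨(b.repr v (Sum.inl ê))⁻¹ • b (Sum.inr (Sum.inl (ê.addSingle hm i))), ?_⟩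
  rw [map_smul, LieAlgebra.ad_apply, hkey, inv_smul_smul₀ ((hmem ê).1 hê)]

end IsLmnBasis

end Lmn

theorem stmt8_general (m n : ℕ) (hm : 1 ≤ m) (k : Type*) [Field k]
    (L : Type*) [LieRing L] [LieAlgebra k L]
    (b : Module.Basis (({e : Fin n → ℕ // ∑ i, e i = m - 1}) ⊕
        ({f : Fin n → ℕ // ∑ i, f i = m}) ⊕ Fin n) k L)
    (hbr : ∀ (e : {e : Fin n → ℕ // ∑ i, e i = m - 1})
        (f : {f : Fin n → ℕ // ∑ i, f i = m}) (i : Fin n),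
        (∀ j, f.val j = e.val j + if j = i then 1 else 0) →
        ⁅b (Sum.inl e), b (Sum.inr (Sum.inl f))⁆ = b (Sum.inr (Sum.inr i)))
    (hbr0 : ∀ (e : {e : Fin n → ℕ // ∑ i, e i = m - 1})
        (f : {f : Fin n → ℕ // ∑ i, f i = m}),
        (¬ ∃ i : Fin n, ∀ j, f.val j = e.val j + if j = i then 1 else 0) →
        ⁅b (Sum.inl e), b (Sum.inr (Sum.inl f))⁆ = 0)
    (hxx : ∀ e e', ⁅b (Sum.inl e), b (Sum.inl e')⁆ = 0)
    (hyy : ∀ f f', ⁅b (Sum.inr (Sum.inl f)), b (Sum.inr (Sum.inl f'))⁆ = 0)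
    (hz : ∀ u (i : Fin n), ⁅b u, b (Sum.inr (Sum.inr i))⁆ = 0)
    (v : L) (hv : ∃ e, b.repr v (Sum.inl e) ≠ 0) :
    Module.finrank k
      (LinearMap.range ((LieAlgebra.ad k L v) : L →ₗ[k] L)) = n := by
  have hb : IsLmnBasis b := ⟨hbr, hbr0, hxx, hyy, hz⟩
  have hrange : LinearMap.range ((LieAlgebra.ad k L v) : L →ₗ[k] L) =
      Submodule.span k (Set.range (b ∘ Sum.inr ∘ Sum.inr)) :=
    le_antisymm (LieAlgebra.range_ad_le_of_lie_basis_mem b _ hb.lie_mem_span_z v)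
      (Submodule.span_le.2 <| Set.range_subset_iff.2 <| hb.z_mem_range_ad hm hv)
  rw [hrange, finrank_span_eq_card <|
    b.linearIndependent.comp _ (Sum.inr_injective.comp Sum.inr_injective), Fintype.card_fin]

/-- in the Lie algebra `L_k = 𝓛_{m,n} ⊗ k` (basis
`{x_𝐞 : 𝐞 ∈ 𝐄} ∪ {y_𝐟 : 𝐟 ∈ 𝐅} ∪ {z₁,…,z_n}` with `[x_𝐞, y_𝐟] = z_i` when
`𝐟 - 𝐞 = 𝐛_i` and all other basis brackets zero, the `z_i` central), every
element `v` with a nonzero `x`-coordinate satisfies `dim_k [v, L_k] = n`. -/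
theorem stmt8 (m n : ℕ) (hm : 1 ≤ m) (hn : 2 ≤ n) (k : Type*) [Field k]
    (L : Type*) [LieRing L] [LieAlgebra k L]
    (b : Module.Basis (({e : Fin n → ℕ // ∑ i, e i = m - 1}) ⊕
        ({f : Fin n → ℕ // ∑ i, f i = m}) ⊕ Fin n) k L)
    (hbr : ∀ (e : {e : Fin n → ℕ // ∑ i, e i = m - 1})
        (f : {f : Fin n → ℕ // ∑ i, f i = m}) (i : Fin n),
        (∀ j, f.val j = e.val j + if j = i then 1 else 0) →
        ⁅b (Sum.inl e), b (Sum.inr (Sum.inl f))⁆ = b (Sum.inr (Sum.inr i)))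
    (hbr0 : ∀ (e : {e : Fin n → ℕ // ∑ i, e i = m - 1})
        (f : {f : Fin n → ℕ // ∑ i, f i = m}),
        (¬ ∃ i : Fin n, ∀ j, f.val j = e.val j + if j = i then 1 else 0) →
        ⁅b (Sum.inl e), b (Sum.inr (Sum.inl f))⁆ = 0)
    (hxx : ∀ e e', ⁅b (Sum.inl e), b (Sum.inl e')⁆ = 0)
    (hyy : ∀ f f', ⁅b (Sum.inr (Sum.inl f)), b (Sum.inr (Sum.inl f'))⁆ = 0)
    (hz : ∀ u (i : Fin n), ⁅b u, b (Sum.inr (Sum.inr i))⁆ = 0)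
    (v : L) (hv : ∃ e, b.repr v (Sum.inl e) ≠ 0) :
    Module.finrank k
      (LinearMap.range ((LieAlgebra.ad k L v) : L →ₗ[k] L)) = n :=
  stmt8_general m n hm k L b hbr hbr0 hxx hyy hz v hv
end

section
/- Let $m, n \in \mathbb{N}$ with $n \geq 2$ and let $k$ be a field. The Lie algebra $L_k = \mathcal{L}_{m,n} \otimes_{\mathbb{Z}} k$ is indecomposable: it admits no direct sum decomposition $L_k = L_1 \oplus L_2$ into two nonzero Lie ideals. -/
/-!
The span `Z` of the `z_i` contains both the derived algebra and the centre. If `v` has a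
nonzero `x`-component, take the lexicographically largest `e` with `v_{x_e} ≠ 0`: the brackets
`⁅v, y_{e + 𝐛_j}⁆` are triangular in the `z_i`, with diagonal entries `v_{x_e}`, so every ideal
containing `v` contains `Z`. Splitting some `x_e` along `L = M₁ ⊕ M₂`, one summand, say the one
in `M₁`, has a nonzero `x`-component, so `Z ≤ M₁`. Then `⁅L, M₂⁆ ≤ M₁ ⊓ M₂ = 0` puts `M₂` in the
centre, hence in `M₁`, and `M₂ = 0`.
-/

open Sum

/-- Exponent vectors of the monomials of degree `d` in `n` variables: the paper's `𝐄` and `𝐅` are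
`Exponents n (m - 1)` and `Exponents n m`. -/
abbrev Exponents (n d : ℕ) := {e : Fin n → ℕ // ∑ i, e i = d}

instance (n d : ℕ) : Fintype (Exponents n d) :=
  Fintype.subtype (Finset.Nat.antidiagonalTuple n d) fun _ => Finset.Nat.mem_antidiagonalTuple

namespace Exponents

variable {n d : ℕ}

def addSingle (e : Exponents n d) (i : Fin n) : Exponents n (d + 1) :=
  ⟨e.val + Pi.single i 1, by simp [Finset.sum_add_distrib, e.prop]⟩

theorem exists_eq_add_single (f : Exponents n (d + 1)) :
    ∃ (e : Exponents n d) (i : Fin n), f.val = e.val + Pi.single i 1 := by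
  obtain ⟨i, -, hi⟩ := Finset.exists_ne_zero_of_sum_ne_zero (f.prop.trans_ne d.succ_ne_zero)
  have hle : Pi.single i 1 ≤ f.val := fun j => by
    rcases eq_or_ne j i with rfl | hj
    · simpa [Nat.one_le_iff_ne_zero] using hi
    · simp [hj]
  refine ⟨⟨f.val - Pi.single i 1, ?_⟩, i, (tsub_add_cancel_of_le hle).symm⟩
  simp only [Pi.sub_apply]
  rw [Finset.sum_tsub_distrib _ fun j _ => hle j, f.prop]
  simp

end Exponents

theorem Pi.toLex_lt_of_add_single_eq {ι : Type*} [LinearOrder ι] {e e' : ι → ℕ} {i j : ι}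
    (hji : j < i) (h : e' + Pi.single i 1 = e + Pi.single j 1) : toLex e < toLex e' := by
  refine ⟨j, fun l hl => ?_, ?_⟩
  · simpa [hl.ne, (hl.trans hji).ne] using (congrFun h l).symm
  · have hj : e' j = e j + 1 := by simpa [hji.ne] using congrFun h j
    show e j < e' j
    omega

theorem Submodule.mem_of_triangular {ι K V : Type*} [LinearOrder ι] [WellFoundedLT ι] [Fintype ι]
    [DivisionRing K] [AddCommGroup V] [Module K V] (p : Submodule K V) (z : ι → V)
    (c : ι → ι → K) (hdiag : ∀ j, c j j ≠ 0) (htri : ∀ i j, j < i → c j i = 0)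
    (hmem : ∀ j, ∑ i, c j i • z i ∈ p) (j : ι) : z j ∈ p := by
  classical
  induction j using WellFoundedLT.induction with
  | ind j ih =>
  have hrest : ∑ i ∈ Finset.univ.erase j, c j i • z i ∈ p := by
    refine p.sum_mem fun i hi => ?_
    rcases lt_or_gt_of_ne (Finset.ne_of_mem_erase hi) with hij | hji
    · exact p.smul_mem _ (ih i hij)
    · simp [htri i j hji]
  have := hmem j
  rw [← Finset.add_sum_erase _ _ (Finset.mem_univ j), p.add_mem_iff_left hrest] at this
  exact (p.smul_mem_iff (hdiag j)).mp this

theorem LieIdeal.eq_bot_of_isCompl_of_lie_mem_of_center_le {R L : Type*} [CommRing R] [LieRing L]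
    [LieAlgebra R L] {M₁ M₂ : LieIdeal R L} (h : IsCompl M₁ M₂) (hder : ∀ v w : L, ⁅v, w⁆ ∈ M₁)
    (hcen : LieAlgebra.center R L ≤ M₁) : M₂ = ⊥ := by
  have hinf : ∀ u, u ∈ M₁ → u ∈ M₂ → u = 0 := fun u h₁ h₂ => by
    simpa [h.inf_eq_bot] using (LieSubmodule.mem_inf M₁ M₂ u).mpr ⟨h₁, h₂⟩
  refine (LieSubmodule.eq_bot_iff M₂).mpr fun w hw => hinf w ?_ hw
  refine hcen ((LieModule.mem_maxTrivSubmodule R L L w).mpr fun v => ?_)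
  exact hinf _ (hder v w) (M₂.lie_mem hw)

section

-- `b (inl e)`, `b (inr (inl f))` and `b (inr (inr i))` are the paper's `x_𝐞`, `y_𝐟` and `z_i`.
variable {k L : Type*} [Field k] [LieRing L] [LieAlgebra k L] {n d : ℕ}
  (b : Module.Basis (Exponents n d ⊕ Exponents n (d + 1) ⊕ Fin n) k L)
  (hbr : ∀ (e : Exponents n d) (f : Exponents n (d + 1)) (i : Fin n),
    (∀ j, f.val j = e.val j + if j = i then 1 else 0) →
    ⁅b (inl e), b (inr (inl f))⁆ = b (inr (inr i)))
  (hbr0 : ∀ (e : Exponents n d) (f : Exponents n (d + 1)),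
    (¬ ∃ i : Fin n, ∀ j, f.val j = e.val j + if j = i then 1 else 0) →
    ⁅b (inl e), b (inr (inl f))⁆ = 0)
  (hxx : ∀ e e', ⁅b (inl e), b (inl e')⁆ = 0)
  (hyy : ∀ f f', ⁅b (inr (inl f)), b (inr (inl f'))⁆ = 0)
  (hz : ∀ u i, ⁅b u, b (inr (inr i))⁆ = 0)

def spanZ : Submodule k L := Submodule.span k (Set.range fun i => b (inr (inr i)))

include hbr hbr0 in
theorem lie_x_y (e : Exponents n d) (f : Exponents n (d + 1)) :
    ⁅b (inl e), b (inr (inl f))⁆ =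
      ∑ i, if f.val = e.val + Pi.single i 1 then b (inr (inr i)) else 0 := by
  have hstep : ∀ i, f.val = e.val + Pi.single i 1 ↔
      ∀ j, f.val j = e.val j + if j = i then 1 else 0 := fun i => by
    simp [funext_iff, Pi.single_apply]
  by_cases h : ∃ i, f.val = e.val + Pi.single i 1
  · obtain ⟨i, hi⟩ := h
    rw [hbr e f i ((hstep i).mp hi), Finset.sum_eq_single i (fun i' _ hi' => if_neg ?_) (by simp),
      if_pos hi]
    intro hi'f
    have := congrFun (hi.symm.trans hi'f) i
    simp [Ne.symm hi'] at this
  · rw [hbr0 e f fun ⟨i, hi⟩ => h ⟨i, (hstep i).mpr hi⟩]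
    exact (Finset.sum_eq_zero fun i _ => if_neg fun hi => h ⟨i, hi⟩).symm

include hbr hbr0 hxx hyy hz

theorem lie_eq_sum (v w : L) :
    ⁅v, w⁆ = ∑ i, (∑ e : Exponents n d, ∑ f : Exponents n (d + 1),
      if f.val = e.val + Pi.single i 1 then
        b.repr v (inl e) * b.repr w (inr (inl f)) - b.repr v (inr (inl f)) * b.repr w (inl e)
      else 0) • b (inr (inr i)) := by
  have hyx : ∀ f e, ⁅b (inr (inl f)), b (inl e)⁆ = -⁅b (inl e), b (inr (inl f))⁆ :=
    fun _ _ => (lie_skew _ _).symm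
  have hzu : ∀ i u, ⁅b (inr (inr i)), b u⁆ = 0 := fun i u => by rw [← lie_skew, hz, neg_zero]
  conv_lhs => rw [← b.sum_repr v, ← b.sum_repr w]
  simp only [add_lie, lie_add, sum_lie, lie_sum, smul_lie, lie_smul, Fintype.sum_sum_type, hxx,
    hyy, hz, hzu, hyx, lie_x_y b hbr hbr0, smul_zero, Finset.sum_const_zero, add_zero, zero_add]
  simp only [Finset.smul_sum, smul_neg, Finset.sum_neg_distrib, smul_ite, smul_zero, smul_smul]
  simp only [Finset.sum_smul, ite_smul, zero_smul, sub_smul]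
  conv_rhs => rw [Finset.sum_comm]; enter [2, e]; rw [Finset.sum_comm]
  conv_lhs => arg 2; rw [Finset.sum_comm]
  rw [← Finset.sum_neg_distrib, ← Finset.sum_add_distrib]
  refine Finset.sum_congr rfl fun e _ => ?_
  rw [← Finset.sum_neg_distrib, ← Finset.sum_add_distrib]
  refine Finset.sum_congr rfl fun f _ => ?_
  rw [← Finset.sum_neg_distrib, ← Finset.sum_add_distrib]
  refine Finset.sum_congr rfl fun i _ => ?_
  split_ifs <;> simp [mul_comm, sub_eq_neg_add]

theorem lie_mem_spanZ (v w : L) : ⁅v, w⁆ ∈ spanZ b := by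
  rw [lie_eq_sum b hbr hbr0 hxx hyy hz]
  exact Submodule.sum_mem _ fun i _ => Submodule.smul_mem _ _ (Submodule.subset_span ⟨i, rfl⟩)

theorem lie_y_eq_sum (v : L) (f : Exponents n (d + 1)) :
    ⁅v, b (inr (inl f))⁆ = ∑ i, (∑ e : Exponents n d,
      if f.val = e.val + Pi.single i 1 then b.repr v (inl e) else 0) • b (inr (inr i)) := by
  rw [lie_eq_sum b hbr hbr0 hxx hyy hz]
  refine Finset.sum_congr rfl fun i _ => congrArg (· • _) (Finset.sum_congr rfl fun e _ => ?_)
  rw [Finset.sum_eq_single f fun f' _ hf' => by simp [Ne.symm hf']] <;>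
    simp

theorem x_lie_eq_sum (e : Exponents n d) (w : L) :
    ⁅b (inl e), w⁆ = ∑ i, (∑ f : Exponents n (d + 1),
      if f.val = e.val + Pi.single i 1 then b.repr w (inr (inl f)) else 0) • b (inr (inr i)) := by
  rw [lie_eq_sum b hbr hbr0 hxx hyy hz]
  refine Finset.sum_congr rfl fun i _ => congrArg (· • _) ?_
  rw [Finset.sum_eq_single e fun e' _ he' => by simp [Ne.symm he']] <;>
    simp

theorem spanZ_le_span_lie_y {v : L} {e₀ : Exponents n d} (hv : b.repr v (inl e₀) ≠ 0) :
    spanZ b ≤ Submodule.span k (Set.range fun f => ⁅v, b (inr (inl f))⁆) := by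
  classical
  obtain ⟨e, he, hmax⟩ := Finset.exists_max_image (Finset.univ.filter fun e => b.repr v (inl e) ≠ 0)
    (fun e => toLex e.val) ⟨e₀, by simpa using hv⟩
  refine Submodule.span_le.mpr ?_
  rintro _ ⟨j, rfl⟩
  refine Submodule.mem_of_triangular _ (fun i => b (inr (inr i)))
    (fun j i => ∑ e' : Exponents n d,
      if (e.addSingle j).val = e'.val + Pi.single i 1 then b.repr v (inl e') else 0)
    (fun j => ?_) (fun i j hji => ?_) (fun j => ?_) j
  · rw [Finset.sum_eq_single_of_mem e (Finset.mem_univ _) fun e' _ he' =>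
      if_neg fun h => he' (Subtype.ext (add_right_cancel h.symm))]
    simpa [Exponents.addSingle] using he
  · refine Finset.sum_eq_zero fun e' _ => ite_eq_right_iff.mpr fun h => ?_
    by_contra hne
    exact (hmax e' (by simpa using hne)).not_gt (Pi.toLex_lt_of_add_single_eq hji h.symm)
  · rw [← lie_y_eq_sum b hbr hbr0 hxx hyy hz]
    exact Submodule.subset_span ⟨_, rfl⟩

theorem mem_spanZ_of_mem_center [NeZero n] {w : L} (hw : w ∈ LieAlgebra.center k L) :
    w ∈ spanZ b := by
  rw [LieModule.mem_maxTrivSubmodule] at hw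
  have hx : ∀ e, b.repr w (inl e) = 0 := fun e => by
    by_contra h
    have hzero : Submodule.span k (Set.range fun f => ⁅w, b (inr (inl f))⁆) = ⊥ := by
      refine Submodule.span_eq_bot.mpr (Set.forall_mem_range.mpr fun f => ?_)
      rw [← lie_skew, hw, neg_zero]
    have := spanZ_le_span_lie_y b hbr hbr0 hxx hyy hz h (Submodule.subset_span ⟨0, rfl⟩)
    exact b.ne_zero _ (by simpa [hzero] using this)
  have hy : ∀ f, b.repr w (inr (inl f)) = 0 := fun f => by
    obtain ⟨e, i, hf⟩ := f.exists_eq_add_single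
    have h := congrArg (fun u => b.repr u (inr (inr i)))
      ((x_lie_eq_sum b hbr hbr0 hxx hyy hz e w).symm.trans (hw _))
    simpa [Finsupp.single_apply, ← hf, ← Subtype.ext_iff] using h
  rw [← b.sum_repr w]
  simp only [Fintype.sum_sum_type, hx, hy, zero_smul, Finset.sum_const_zero, zero_add]
  exact Submodule.sum_mem _ fun i _ => Submodule.smul_mem _ _ (Submodule.subset_span ⟨i, rfl⟩)

theorem eq_bot_of_isCompl_of_repr_ne_zero [NeZero n] {M₁ M₂ : LieIdeal k L} (h : IsCompl M₁ M₂)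
    {v : L} (hv : v ∈ M₁) {e : Exponents n d} (he : b.repr v (inl e) ≠ 0) : M₂ = ⊥ := by
  have hZ : spanZ b ≤ (M₁ : Submodule k L) :=
    (spanZ_le_span_lie_y b hbr hbr0 hxx hyy hz he).trans <| Submodule.span_le.mpr <| by
      rintro _ ⟨f, rfl⟩
      exact lie_mem_left k L M₁ _ _ hv
  exact LieIdeal.eq_bot_of_isCompl_of_lie_mem_of_center_le h
    (fun v w => hZ (lie_mem_spanZ b hbr hbr0 hxx hyy hz v w))
    (fun w hw => hZ (mem_spanZ_of_mem_center b hbr hbr0 hxx hyy hz hw))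

end

/-- the Lie algebra `L_k = 𝓛_{m,n} ⊗ k` (basis
`{x_𝐞 : 𝐞 ∈ 𝐄} ∪ {y_𝐟 : 𝐟 ∈ 𝐅} ∪ {z₁,…,z_n}` with `[x_𝐞, y_𝐟] = z_i` when
`𝐟 - 𝐞 = 𝐛_i`, all other basis brackets zero, the `z_i` central) is
indecomposable: it admits no direct sum decomposition into two nonzero Lie
ideals. -/
theorem stmt9 (m n : ℕ) (hm : 1 ≤ m) (hn : 2 ≤ n) (k : Type*) [Field k]
    (L : Type*) [LieRing L] [LieAlgebra k L]
    (b : Module.Basis (({e : Fin n → ℕ // ∑ i, e i = m - 1}) ⊕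
        ({f : Fin n → ℕ // ∑ i, f i = m}) ⊕ Fin n) k L)
    (hbr : ∀ (e : {e : Fin n → ℕ // ∑ i, e i = m - 1})
        (f : {f : Fin n → ℕ // ∑ i, f i = m}) (i : Fin n),
        (∀ j, f.val j = e.val j + if j = i then 1 else 0) →
        ⁅b (Sum.inl e), b (Sum.inr (Sum.inl f))⁆ = b (Sum.inr (Sum.inr i)))
    (hbr0 : ∀ (e : {e : Fin n → ℕ // ∑ i, e i = m - 1})
        (f : {f : Fin n → ℕ // ∑ i, f i = m}),
        (¬ ∃ i : Fin n, ∀ j, f.val j = e.val j + if j = i then 1 else 0) →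
        ⁅b (Sum.inl e), b (Sum.inr (Sum.inl f))⁆ = 0)
    (hxx : ∀ e e', ⁅b (Sum.inl e), b (Sum.inl e')⁆ = 0)
    (hyy : ∀ f f', ⁅b (Sum.inr (Sum.inl f)), b (Sum.inr (Sum.inl f'))⁆ = 0)
    (hz : ∀ u (i : Fin n), ⁅b u, b (Sum.inr (Sum.inr i))⁆ = 0)
    (M₁ M₂ : LieIdeal k L) (hcompl : IsCompl M₁ M₂) :
    M₁ = ⊥ ∨ M₂ = ⊥ := by
  obtain ⟨d, rfl⟩ : ∃ d, m = d + 1 := ⟨m - 1, by omega⟩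
  have : NeZero n := ⟨by omega⟩
  let e : Exponents n d := ⟨Pi.single 0 d, by simp⟩
  obtain ⟨v₁, hv₁, v₂, hv₂, hsum⟩ :=
    (LieSubmodule.mem_sup _ _ _).mp (hcompl.sup_eq_top ▸ LieSubmodule.mem_top (b (inl e)))
  have hrepr : b.repr v₁ (inl e) + b.repr v₂ (inl e) = 1 := by
    rw [← Finsupp.add_apply, ← map_add, hsum, b.repr_self, Finsupp.single_eq_same]
  by_cases h₁ : b.repr v₁ (inl e) = 0
  · rw [h₁, zero_add] at hrepr
    exact .inl (eq_bot_of_isCompl_of_repr_ne_zero (d := d) b hbr hbr0 hxx hyy hz hcompl.symm hv₂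
      (hrepr ▸ one_ne_zero))
  · exact .inr (eq_bot_of_isCompl_of_repr_ne_zero (d := d) b hbr hbr0 hxx hyy hz hcompl hv₁ h₁)
end

section
/- Let $g \geq 1$, $c \geq 2$, and for $i \in [c]$ let $m_i = \frac{1}{i}\sum_{j \mid i} \mu(j) g^{i/j}$. Let $d \geq 1$, $\alpha = \frac{1}{g}\sum_{i=1}^c i m_i$, and $\beta(d) = 2m_2 + \cdots + (c-1)m_{c-1} + dc\, m_c$. Define $W(X,Y) = \prod_{j=0}^{g-1} (1 - X^{\beta(d)+j} Y^{\alpha})^{-1} \in \mathbb{Q}(X,Y)$. Then $W(X^{-1}, Y^{-1}) = (-1)^g X^{g\beta(d) + \binom{g}{2}} Y^{g\alpha} W(X,Y)$. -/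
/-! With `t = X^(β+j) Y^α`, each factor obeys `(1 - t⁻¹)⁻¹ = -t (1 - t)⁻¹`, because
`1 - t⁻¹ = -t⁻¹ (1 - t)`; the product of the `-t` over `j < g` is
`(-1)^g X^(gβ + C(g,2)) Y^(gα)`. -/

open Finset

theorem inv_one_sub_inv {K : Type*} [Field K] {t : K} (ht : t ≠ 0) :
    (1 - t⁻¹)⁻¹ = -t * (1 - t)⁻¹ := by
  rw [show 1 - t⁻¹ = -t⁻¹ * (1 - t) by field_simp; ring, mul_inv, inv_neg, inv_inv]

theorem prod_inv_one_sub_inv {K ι : Type*} [Field K] {s : Finset ι} {f : ι → K}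
    (hf : ∀ i ∈ s, f i ≠ 0) :
    ∏ i ∈ s, (1 - (f i)⁻¹)⁻¹ = (-1) ^ #s * (∏ i ∈ s, f i) * ∏ i ∈ s, (1 - f i)⁻¹ := by
  rw [prod_congr rfl fun i hi => inv_one_sub_inv (hf i hi), prod_mul_distrib, prod_neg]

theorem sum_range_add_const (a n : ℕ) : ∑ j ∈ range n, (a + j) = n * a + n.choose 2 := by
  rw [sum_add_distrib, sum_const, card_range, smul_eq_mul, sum_range_id, Nat.choose_two_right]

theorem stmt13_general (g : ℕ) (α : ℕ) (β : ℕ)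
    (X Y : ℚ) (hX : X ≠ 0) (hY : Y ≠ 0) :
    (∏ j ∈ Finset.range g, (1 - X⁻¹ ^ (β + j) * Y⁻¹ ^ α)⁻¹) =
      (-1 : ℚ) ^ g * X ^ (g * β + g.choose 2) * Y ^ (g * α) *
        ∏ j ∈ Finset.range g, (1 - X ^ (β + j) * Y ^ α)⁻¹ := by
  simp_rw [inv_pow, ← mul_inv]
  rw [prod_inv_one_sub_inv fun j _ => by positivity, card_range, prod_mul_distrib,
    prod_pow_eq_pow_sum, prod_const, card_range, sum_range_add_const, ← pow_mul, mul_comm α g]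
  ring

/-- the functional equation
`W(X⁻¹,Y⁻¹) = (-1)^g X^{gβ(d)+C(g,2)} Y^{gα} W(X,Y)` for
`W(X,Y) = ∏_{j=0}^{g-1} (1 - X^{β(d)+j} Y^α)⁻¹`, where the `m_i` are given by
Witt's formula, `α = (1/g) ∑_{i=1}^c i m_i` and
`β(d) = 2 m_2 + ⋯ + (c-1) m_{c-1} + d c m_c`. -/
theorem stmt13 (g c d : ℕ) (hg : 1 ≤ g) (hc : 2 ≤ c) (hd : 1 ≤ d)
    (m : ℕ → ℕ)
    (hm : ∀ i, 1 ≤ i →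
      ((i * m i : ℕ) : ℤ) =
        ∑ j ∈ i.divisors, ArithmeticFunction.moebius j * (g : ℤ) ^ (i / j))
    (α : ℕ) (hα : g * α = ∑ i ∈ Finset.Icc 1 c, i * m i)
    (β : ℕ) (hβ : β = (∑ i ∈ Finset.Icc 2 (c - 1), i * m i) + d * c * m c)
    (X Y : ℚ) (hX : X ≠ 0) (hY : Y ≠ 0) :
    (∏ j ∈ Finset.range g, (1 - X⁻¹ ^ (β + j) * Y⁻¹ ^ α)⁻¹) =
      (-1 : ℚ) ^ g * X ^ (g * β + g.choose 2) * Y ^ (g * α) *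
        ∏ j ∈ Finset.range g, (1 - X ^ (β + j) * Y ^ α)⁻¹ :=
  stmt13_general g α β X Y hX hY
end

section
/- Let $m, d \geq 1$ and define, for $j \in \{0, 1, \dots, m\}$, the monomials $Z_j = X^{\binom{m+1}{2} - \binom{j+1}{2} + 2md} Y^{m+1}$. Define $W(X,Y) = \frac{\sum_{\sigma \in S_m} X^{-\ell(\sigma)} \prod_{j \in \mathrm{Des}(\sigma)} Z_j}{\prod_{j=0}^m (1 - Z_j)}$, where $\ell$ is the Coxeter (inversion) length on the symmetric group $S_m$ and $\mathrm{Des}(\sigma) = \{i \in [m-1] : \sigma(i) > \sigma(i+1)\}$. Then $W(X^{-1}, Y^{-1}) = (-1)^{m+1} X^{m^2 + 4md} Y^{2(m+1)} W(X,Y)$. -/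
/-- The value of the permutation `σ` at the (0-based) position `i`, as a natural
number (0-based); junk value `0` out of range. -/
def pval (m : ℕ) (σ : Equiv.Perm (Fin m)) (i : ℕ) : ℕ :=
  if h : i < m then (σ ⟨i, h⟩ : ℕ) else 0

/-- The Coxeter (inversion) length of `σ ∈ S_m`. -/
def permLen (m : ℕ) (σ : Equiv.Perm (Fin m)) : ℕ :=
  ((Finset.univ : Finset (Fin m × Fin m)).filter
    (fun p => p.1 < p.2 ∧ σ p.2 < σ p.1)).card

/-- The descent set of `σ ∈ S_m`, recorded with 0-based positions:
`k ∈ permDes m σ` iff `σ` has a descent at the 1-based position `k+1`. -/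
def permDes (m : ℕ) (σ : Equiv.Perm (Fin m)) : Finset ℕ :=
  (Finset.range (m - 1)).filter (fun k => pval m σ (k + 1) < pval m σ k)

/-- The monomial `Z_j = X^{C(m+1,2) - C(j+1,2) + 2md} Y^{m+1}`, `j ∈ {0,…,m}`. -/
def Zmon (m d : ℕ) (X Y : ℚ) (j : ℕ) : ℚ :=
  X ^ ((m + 1).choose 2 - (j + 1).choose 2 + 2 * m * d) * Y ^ (m + 1)

/-- `W(X,Y) = (∑_{σ ∈ S_m} X^{-ℓ(σ)} ∏_{j ∈ Des σ} Z_j) / ∏_{j=0}^m (1 - Z_j)`. -/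
noncomputable def Wheis (m d : ℕ) (X Y : ℚ) : ℚ :=
  (∑ σ : Equiv.Perm (Fin m),
      X ^ (-(permLen m σ : ℤ)) * ∏ k ∈ permDes m σ, Zmon m d X Y (k + 1)) /
    ∏ j ∈ Finset.range (m + 1), (1 - Zmon m d X Y j)

/-!
Left multiplication by the longest element `w₀` (`Fin.revPerm`) is a bijection of `S_m` with
`ℓ(w₀σ) = C(m,2) - ℓ(σ)` and `Des(w₀σ) = [m-1] \ Des(σ)`. Hence inverting `X` and all `Z_j`
multiplies the numerator by `X^{C(m,2)} (Z_1 ⋯ Z_{m-1})⁻¹`, while `1 - Z_j⁻¹ = -Z_j⁻¹ (1 - Z_j)`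
multiplies the denominator by `(-1)^{m+1} (Z_0 ⋯ Z_m)⁻¹`. What is left is
`(-1)^{m+1} X^{C(m,2)} Z_0 Z_m = (-1)^{m+1} X^{m²+4md} Y^{2(m+1)}`.
-/

open Finset

lemma card_filter_fst_lt_snd (m : ℕ) : #{p : Fin m × Fin m | p.1 < p.2} = m.choose 2 := by
  rw [Nat.choose_two_right, ← Finset.sum_range_id, ← Fin.sum_univ_eq_sum_range, card_filter,
    Fintype.sum_prod_type_right]
  refine Fintype.sum_congr _ _ fun b => ?_
  rw [← card_filter, ← Fin.card_Iio]
  congr 1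
  ext a
  simp

section Permutations

variable {m : ℕ} (σ : Equiv.Perm (Fin m))

lemma permLen_revPerm_mul_add_permLen :
    permLen m (Fin.revPerm * σ) + permLen m σ = m.choose 2 := by
  rw [← card_filter_fst_lt_snd,
    ← card_filter_add_card_filter_not (fun p : Fin m × Fin m => σ p.2 < σ p.1), add_comm]
  simp only [permLen, filter_filter]
  congr 2
  ext p
  simp only [Equiv.Perm.mul_apply, Fin.revPerm_apply, Fin.rev_lt_rev, mem_filter, mem_univ,
    true_and, not_lt]
  exact ⟨fun h => ⟨h.1, h.2.le⟩, fun h => ⟨h.1, h.2.lt_of_ne (σ.injective.ne h.1.ne)⟩⟩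

lemma permDes_revPerm_mul :
    permDes m (Fin.revPerm * σ) = range (m - 1) \ permDes m σ := by
  ext k
  simp only [permDes, mem_filter, mem_sdiff, mem_range]
  by_cases hk : k < m - 1
  · have hne : σ ⟨k + 1, by omega⟩ ≠ σ ⟨k, by omega⟩ := σ.injective.ne (by simp [Fin.ext_iff])
    have hne' := Fin.val_ne_iff.mpr hne
    simp only [pval, dif_pos (show k + 1 < m by omega), dif_pos (show k < m by omega), hk,
      true_and, Equiv.Perm.mul_apply, Fin.revPerm_apply, Fin.val_rev, not_lt]
    omega
  · simp [hk]

end Permutations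

lemma prod_sdiff_inv {ι K : Type*} [Field K] [DecidableEq ι] {s t : Finset ι} (hst : s ⊆ t)
    {f : ι → K} (hf : ∀ i ∈ s, f i ≠ 0) :
    ∏ i ∈ t \ s, (f i)⁻¹ = (∏ i ∈ t, f i)⁻¹ * ∏ i ∈ s, f i := by
  rw [← prod_sdiff hst, prod_inv_distrib, mul_inv, mul_assoc,
    inv_mul_cancel₀ (prod_ne_zero_iff.mpr hf), mul_one]

lemma prod_one_sub_inv {ι K : Type*} [Field K] (s : Finset ι) {z : ι → K}
    (hz : ∀ i ∈ s, z i ≠ 0) :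
    ∏ i ∈ s, (1 - (z i)⁻¹) = (-1) ^ #s * (∏ i ∈ s, z i)⁻¹ * ∏ i ∈ s, (1 - z i) := by
  rw [← prod_const, ← prod_inv_distrib, ← prod_mul_distrib, ← prod_mul_distrib]
  refine prod_congr rfl fun i hi => ?_
  field_simp [hz i hi]
  ring

lemma prod_range_succ_eq_mul_prod_mul {M : Type*} [CommMonoid M] {m : ℕ} (hm : 1 ≤ m)
    (f : ℕ → M) :
    ∏ j ∈ range (m + 1), f j = f 0 * (∏ k ∈ range (m - 1), f (k + 1)) * f m := by
  obtain ⟨n, rfl⟩ := Nat.exists_eq_add_of_le' hm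
  rw [prod_range_succ, prod_range_succ', Nat.add_sub_cancel, mul_comm (f 0)]

lemma choose_two_add_succ_choose_two (m : ℕ) : m.choose 2 + (m + 1).choose 2 = m ^ 2 := by
  induction m with
  | zero => rfl
  | succ n ih =>
    rw [Nat.choose_succ_succ' (n + 1), Nat.choose_one_right]
    rw [Nat.choose_succ_succ' n, Nat.choose_one_right] at ih ⊢
    linarith

def descentSum {K : Type*} [Field K] (m : ℕ) (X : K) (z : ℕ → K) : K :=
  ∑ σ : Equiv.Perm (Fin m), X ^ (-(permLen m σ : ℤ)) * ∏ k ∈ permDes m σ, z k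

lemma descentSum_inv {K : Type*} [Field K] (m : ℕ) {X : K} (hX : X ≠ 0) {z : ℕ → K}
    (hz : ∀ k, z k ≠ 0) :
    descentSum m X⁻¹ (fun k => (z k)⁻¹) =
      X ^ m.choose 2 * (∏ k ∈ range (m - 1), z k)⁻¹ * descentSum m X z := by
  rw [descentSum, descentSum, mul_sum, ← Equiv.sum_comp (Equiv.mulLeft Fin.revPerm)]
  refine Fintype.sum_congr _ _ fun σ => ?_
  have hlen : (permLen m (Fin.revPerm * σ) : ℤ) = m.choose 2 - permLen m σ := by
    rw [← permLen_revPerm_mul_add_permLen σ]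
    push_cast
    ring
  rw [Equiv.coe_mulLeft, permDes_revPerm_mul,
    prod_sdiff_inv (s := permDes m σ) (filter_subset _ _) fun k _ => hz k, inv_zpow', neg_neg,
    hlen, zpow_sub₀ hX, zpow_natCast, zpow_neg, div_eq_mul_inv]
  ring

lemma Zmon_inv (m d : ℕ) (X Y : ℚ) (j : ℕ) : Zmon m d X⁻¹ Y⁻¹ j = (Zmon m d X Y j)⁻¹ := by
  simp only [Zmon, inv_pow, mul_inv]

lemma Zmon_ne_zero (m d : ℕ) {X Y : ℚ} (hX : X ≠ 0) (hY : Y ≠ 0) (j : ℕ) :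
    Zmon m d X Y j ≠ 0 :=
  mul_ne_zero (pow_ne_zero _ hX) (pow_ne_zero _ hY)

lemma pow_choose_two_mul_Zmon_zero_mul_Zmon_self (m d : ℕ) (X Y : ℚ) :
    X ^ m.choose 2 * (Zmon m d X Y 0 * Zmon m d X Y m) =
      X ^ (m ^ 2 + 4 * m * d) * Y ^ (2 * (m + 1)) := by
  have h := choose_two_add_succ_choose_two m
  have he : m ^ 2 + 4 * m * d = m.choose 2 + ((m + 1).choose 2 - (0 + 1).choose 2 + 2 * m * d)
      + ((m + 1).choose 2 - (m + 1).choose 2 + 2 * m * d) := by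
    rw [Nat.choose_eq_zero_of_lt (by norm_num : 0 + 1 < 2), Nat.sub_zero, Nat.sub_self, ← h]
    ring
  rw [Zmon, Zmon, he]
  ring

lemma Wheis_eq_descentSum (m d : ℕ) (X Y : ℚ) :
    Wheis m d X Y = descentSum m X (fun k => Zmon m d X Y (k + 1)) /
      ∏ j ∈ range (m + 1), (1 - Zmon m d X Y j) := rfl

theorem stmt14_general (m d : ℕ) (hm : 1 ≤ m)
    (X Y : ℚ) (hX : X ≠ 0) (hY : Y ≠ 0) :
    Wheis m d X⁻¹ Y⁻¹ =
      (-1 : ℚ) ^ (m + 1) * X ^ (m ^ 2 + 4 * m * d) * Y ^ (2 * (m + 1)) *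
        Wheis m d X Y := by
  have hZ := Zmon_ne_zero m d hX hY
  have hP : ∏ k ∈ range (m - 1), Zmon m d X Y (k + 1) ≠ 0 := prod_ne_zero_iff.mpr fun k _ => hZ _
  simp only [Wheis_eq_descentSum, Zmon_inv]
  rw [descentSum_inv m hX fun k => hZ (k + 1), prod_one_sub_inv _ fun j _ => hZ j, card_range,
    prod_range_succ_eq_mul_prod_mul hm, mul_div_mul_comm, mul_assoc _ (X ^ _),
    ← pow_choose_two_mul_Zmon_zero_mul_Zmon_self]
  congr 1
  have hsign : ((-1 : ℚ) ^ (m + 1)) ^ 2 = 1 := by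
    rw [← pow_mul, Even.neg_one_pow ⟨m + 1, by ring⟩]
  field_simp
  rw [hsign, one_mul]

/-- the functional equation
`W(X⁻¹,Y⁻¹) = (-1)^{m+1} X^{m²+4md} Y^{2(m+1)} W(X,Y)` for the local
pro-isomorphic zeta function of `𝓗_m ⊗ 𝓞_K`. -/
theorem stmt14 (m d : ℕ) (hm : 1 ≤ m) (hd : 1 ≤ d)
    (X Y : ℚ) (hX : X ≠ 0) (hY : Y ≠ 0) :
    Wheis m d X⁻¹ Y⁻¹ =
      (-1 : ℚ) ^ (m + 1) * X ^ (m ^ 2 + 4 * m * d) * Y ^ (2 * (m + 1)) *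
        Wheis m d X Y :=
  stmt14_general m d hm X Y hX hY
end

section
/- Let $d \geq 1$ and define $W(X,Y) = \frac{1 + X^{84+201d}Y^{102} + 2X^{85+201d}Y^{102} + 2X^{170+402d}Y^{204}}{(1 - X^{84+201d}Y^{102})(1 - X^{171+402d}Y^{204})} \in \mathbb{Q}(X,Y)$. Then there exist no integers $a, b, c$ such that $W(X^{-1}, Y^{-1}) = (-1)^c X^a Y^b W(X,Y)$. -/
/-- The rational function `W_{𝓛,d}(X,Y)` of the Berman–Klopsch Lie lattice. -/
noncomputable def Wbk (d : ℕ) (X Y : ℚ) : ℚ :=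
  (1 + X ^ (84 + 201 * d) * Y ^ 102 + 2 * X ^ (85 + 201 * d) * Y ^ 102 +
      2 * X ^ (170 + 402 * d) * Y ^ 204) /
    ((1 - X ^ (84 + 201 * d) * Y ^ 102) * (1 - X ^ (171 + 402 * d) * Y ^ 204))

lemma no_pow_eq (b : ℤ) :
    (2 : ℚ) ^ b * (2 ^ 103 + 1) ≠ 2 ^ 103 * (2 ^ 101 + 1) := by
  intro h
  have hb : b = 103 + (b - 103) := by ring
  rw [hb, zpow_add₀ (two_ne_zero), mul_assoc] at h
  have h103 : (2 : ℚ) ^ (103 : ℤ) = 2 ^ (103 : ℕ) := zpow_natCast 2 103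
  rw [h103] at h
  have h' : (2 : ℚ) ^ (b - 103) * (2 ^ 103 + 1) = 2 ^ 101 + 1 :=
    mul_left_cancel₀ (by positivity) h
  obtain ⟨n, hn | hn⟩ := (b - 103).eq_nat_or_neg
  all_goals rw [hn] at h'
  · rw [zpow_natCast] at h'
    have h1 : (1 : ℚ) ≤ 2 ^ n := one_le_pow₀ (by norm_num)
    have h2 : (2 : ℚ) ^ 103 + 1 ≤ 2 ^ n * (2 ^ 103 + 1) :=
      le_mul_of_one_le_left (by positivity) h1
    rw [h'] at h2
    norm_num at h2
  · rw [zpow_neg, zpow_natCast, inv_mul_eq_iff_eq_mul₀ (by positivity)] at h'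
    rcases n with _ | m
    · norm_num at h'
    · have hz : ((2 : ℤ) ^ 103 + 1) = 2 ^ (m + 1) * (2 ^ 101 + 1) := by
        exact_mod_cast h'
      have hdvd : (2 : ℤ) ∣ 2 ^ 103 + 1 := by
        rw [hz]
        exact dvd_mul_of_dvd_left (dvd_pow_self 2 (Nat.succ_ne_zero m)) _
      have h1 : (2 : ℤ) ∣ 1 :=
        (dvd_add_right (dvd_pow_self 2 (by norm_num))).mp hdvd
      norm_num at h1

/-- there are no integers `a, b, c` such that
`W(X⁻¹,Y⁻¹) = (-1)^c X^a Y^b W(X,Y)`; i.e. `W_{𝓛,d}` satisfies no functional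
equation.  (The identity of rational functions is expressed through evaluation at
all rational points where the denominators do not vanish.) -/
theorem stmt17 (d : ℕ) (hd : 1 ≤ d) :
    ¬ ∃ a b c : ℤ, ∀ X Y : ℚ, X ≠ 0 → Y ≠ 0 →
      (1 - X ^ (84 + 201 * d) * Y ^ 102) * (1 - X ^ (171 + 402 * d) * Y ^ 204) ≠ 0 →
      (1 - X⁻¹ ^ (84 + 201 * d) * Y⁻¹ ^ 102) * (1 - X⁻¹ ^ (171 + 402 * d) * Y⁻¹ ^ 204) ≠ 0 →
      Wbk d X⁻¹ Y⁻¹ = (-1 : ℚ) ^ c * X ^ a * Y ^ b * Wbk d X Y := by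
  rintro ⟨a, b, c, h⟩
  have h1 := h 1 2 one_ne_zero two_ne_zero (by norm_num) (by norm_num)
  simp only [Wbk, inv_one, one_pow, one_zpow, one_mul] at h1
  -- key positive quantities
  have q2pos : (0 : ℚ) <
      (1 + 2 ^ 102 + 2 * 2 ^ 102 + 2 * 2 ^ 204) /
        ((1 - 2 ^ 102) * (1 - 2 ^ 204)) := by
    apply div_pos (by positivity)
    have a1 : (1 : ℚ) - 2 ^ 102 < 0 := by norm_num
    have a2 : (1 : ℚ) - 2 ^ 204 < 0 := by norm_num
    exact mul_pos_of_neg_of_neg a1 a2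
  have q1pos : (0 : ℚ) <
      (1 + (2 : ℚ)⁻¹ ^ 102 + 2 * (2 : ℚ)⁻¹ ^ 102 + 2 * (2 : ℚ)⁻¹ ^ 204) /
        ((1 - (2 : ℚ)⁻¹ ^ 102) * (1 - (2 : ℚ)⁻¹ ^ 204)) := by
    apply div_pos (by positivity)
    have a1 : (0 : ℚ) < 1 - (2 : ℚ)⁻¹ ^ 102 := by norm_num
    have a2 : (0 : ℚ) < 1 - (2 : ℚ)⁻¹ ^ 204 := by norm_num
    exact mul_pos a1 a2
  have hbpos : (0 : ℚ) < 2 ^ b := zpow_pos (by norm_num) b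
  -- sign must be +1
  have hsign : (-1 : ℚ) ^ c = 1 := by
    rcases Int.even_or_odd c with hc | hc
    · exact hc.neg_one_zpow
    · exfalso
      rw [hc.neg_one_zpow] at h1
      nlinarith [h1, q1pos, q2pos, hbpos]
  rw [hsign, one_mul, mul_comm] at h1
  -- now h1 : q1 = q2 * 2 ^ b, derive the impossible power identity
  apply no_pow_eq b
  have hq2 : ((1 : ℚ) - 2 ^ 102) * (1 - 2 ^ 204) ≠ 0 := by norm_num
  have hq1 : ((1 : ℚ) - (2 : ℚ)⁻¹ ^ 102) * (1 - (2 : ℚ)⁻¹ ^ 204) ≠ 0 := by norm_num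
  field_simp at h1
  -- h1 should now be a polynomial identity in 2 ^ b; finish with ring_nf / linear_combination
  nlinarith [h1]
end
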